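/- arXiv:1008.0199 — 2 statements merged into one kernel-verified Lean document; each statement's English description precedes it below -/
import Mathlib

section
/- For every s > 1 and every ξ ∈ (0, π], the smaller eigenvalue Λ_ph(ξ) of S(ξ) = M(ξ)⁻¹ R^s(ξ) satisfies 4 sin²(ξ/2) ≤ Λ_ph(ξ) ≤ 6(1 − cos ξ)/(2 + cos ξ). -/
/-!
Since det M = 1/12, the eigenvalues of M⁻¹R^s are the roots of det(R^s − ΛM) = Λ²/12 − BΛ + C,
so Λ_ph is the least root of the monic quadratic q(Λ) = Λ² − 12BΛ + 12C. A point where q ≤ 0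
lies to the right of the least root, and a point left of the vertex where q ≥ 0 lies to its left.
With c = cos ξ one finds q(2(1 − c)) = 8(s − 1)(1 − c)² ≥ 0, with 2(1 − c) left of the vertex,
and q(6(1 − c)/(2 + c)) = −12(1 − c)³(1 + c)/(2 + c)² ≤ 0.
-/

open Real Complex Matrix Filter Topology

/-- Fourier symbol of the SIPG mass matrix (mesh size h = 1). -/
noncomputable def Msym (ξ : ℝ) : Matrix (Fin 2) (Fin 2) ℂ :=
  !![(((2 + Real.cos ξ) / 3 : ℝ) : ℂ), Complex.I * (Real.sin ξ : ℂ) / 6;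
     -Complex.I * (Real.sin ξ : ℂ) / 6, (((2 - Real.cos ξ) / 12 : ℝ) : ℂ)]

/-- Fourier symbol of the SIPG stiffness matrix with penalty parameter s (mesh size h = 1). -/
noncomputable def Rsym (s ξ : ℝ) : Matrix (Fin 2) (Fin 2) ℂ :=
  !![((4 * Real.sin (ξ / 2) ^ 2 : ℝ) : ℂ), 0;
     0, ((s - Real.cos (ξ / 2) ^ 2 : ℝ) : ℂ)]

/-- The matrix S(ξ) = M(ξ)⁻¹ R^s(ξ). -/
noncomputable def Ssym (s ξ : ℝ) : Matrix (Fin 2) (Fin 2) ℂ := (Msym ξ)⁻¹ * Rsym s ξ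

/-- Λ is an eigenvalue of the 2×2 complex matrix S. -/
def IsEigOf (S : Matrix (Fin 2) (Fin 2) ℂ) (Λ : ℂ) : Prop :=
  ∃ v : Fin 2 → ℂ, v ≠ 0 ∧ S.mulVec v = Λ • v

/-- The coefficient B(ξ) of the characteristic quadratic Λ²/12 − B Λ + C = 0. -/
noncomputable def Bcoef (s ξ : ℝ) : ℝ :=
  4 * Real.sin (ξ / 2) ^ 2 * (2 - Real.cos ξ) / 12 +
    (s - Real.cos (ξ / 2) ^ 2) * (2 + Real.cos ξ) / 3

/-- The coefficient C(ξ) of the characteristic quadratic Λ²/12 − B Λ + C = 0. -/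
noncomputable def Ccoef (s ξ : ℝ) : ℝ :=
  4 * Real.sin (ξ / 2) ^ 2 * (s - Real.cos (ξ / 2) ^ 2)

lemma sin_sq_half_eq (x : ℝ) : Real.sin (x / 2) ^ 2 = (1 - Real.cos x) / 2 := by
  rw [Real.sin_sq, Real.cos_sq, show 2 * (x / 2) = x by ring]; ring

lemma cos_sq_half_eq (x : ℝ) : Real.cos (x / 2) ^ 2 = (1 + Real.cos x) / 2 := by
  rw [Real.cos_sq, show 2 * (x / 2) = x by ring]; ring

section LeastRoot

variable {p q r x : ℝ}

lemma le_half_of_isLeast_roots (h : IsLeast {y : ℝ | y ^ 2 - p * y + q = 0} r) : r ≤ p / 2 := by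
  have hr : r ^ 2 - p * r + q = 0 := h.1
  have hother_root : (p - r) ^ 2 - p * (p - r) + q = 0 := by linear_combination hr
  linarith [h.2 hother_root]

lemma le_of_isLeast_roots (h : IsLeast {y : ℝ | y ^ 2 - p * y + q = 0} r)
    (hx : x ≤ p / 2) (hq : 0 ≤ x ^ 2 - p * x + q) : x ≤ r := by
  have hr : r ^ 2 - p * r + q = 0 := h.1
  have hrp := le_half_of_isLeast_roots h
  nlinarith

lemma isLeast_roots_le (h : IsLeast {y : ℝ | y ^ 2 - p * y + q = 0} r)
    (hq : x ^ 2 - p * x + q ≤ 0) : r ≤ x := by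
  have hr : r ^ 2 - p * r + q = 0 := h.1
  have hrp := le_half_of_isLeast_roots h
  nlinarith

end LeastRoot

lemma isEigOf_inv_mul_iff {M R : Matrix (Fin 2) (Fin 2) ℂ} (hM : IsUnit M.det) (Λ : ℂ) :
    IsEigOf (M⁻¹ * R) Λ ↔ (R - Λ • M).det = 0 := by
  rw [← Matrix.exists_mulVec_eq_zero_iff]
  refine exists_congr fun v => and_congr_right fun _ => ?_
  rw [Matrix.sub_mulVec, Matrix.smul_mulVec, sub_eq_zero, ← Matrix.mulVec_mulVec]
  constructor
  · intro h
    rw [← Matrix.mulVec_smul, ← h, Matrix.mulVec_mulVec, Matrix.mul_nonsing_inv _ hM,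
      Matrix.one_mulVec]
  · intro h
    rw [h, Matrix.mulVec_smul, Matrix.mulVec_mulVec, Matrix.nonsing_inv_mul _ hM,
      Matrix.one_mulVec]

lemma det_Msym (ξ : ℝ) : (Msym ξ).det = 1 / 12 := by
  have h : (Real.sin ξ : ℂ) ^ 2 + (Real.cos ξ : ℂ) ^ 2 = 1 := by
    exact_mod_cast Real.sin_sq_add_cos_sq ξ
  simp only [Msym, Matrix.det_fin_two_of]
  push_cast [-Complex.ofReal_sin, -Complex.ofReal_cos]
  linear_combination (-1 / 36 : ℂ) * h + ((Real.sin ξ : ℂ) ^ 2 / 36) * Complex.I_sq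

lemma det_Rsym_sub_smul_Msym (s ξ x : ℝ) :
    (Rsym s ξ - (x : ℂ) • Msym ξ).det = ((x ^ 2 / 12 - Bcoef s ξ * x + Ccoef s ξ : ℝ) : ℂ) := by
  have h : (Real.sin ξ : ℂ) ^ 2 + (Real.cos ξ : ℂ) ^ 2 = 1 := by
    exact_mod_cast Real.sin_sq_add_cos_sq ξ
  simp only [Matrix.det_fin_two, Rsym, Msym, Bcoef, Ccoef, Matrix.sub_apply, Matrix.smul_apply,
    Matrix.of_apply, Matrix.cons_val', Matrix.cons_val_zero, Matrix.cons_val_one,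
    Matrix.cons_val_fin_one, smul_eq_mul]
  push_cast [-Complex.ofReal_sin, -Complex.ofReal_cos]
  linear_combination (-(x : ℂ) ^ 2 / 36) * h + ((x : ℂ) ^ 2 * (Real.sin ξ : ℂ) ^ 2 / 36) * Complex.I_sq

lemma isEigOf_Ssym_iff (s ξ x : ℝ) :
    IsEigOf (Ssym s ξ) x ↔ x ^ 2 - 12 * Bcoef s ξ * x + 12 * Ccoef s ξ = 0 := by
  have hM : IsUnit (Msym ξ).det := by rw [det_Msym]; norm_num
  rw [Ssym, isEigOf_inv_mul_iff hM, det_Rsym_sub_smul_Msym, Complex.ofReal_eq_zero]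
  constructor
  · intro h; linear_combination 12 * h
  · intro h; linear_combination h / 12

lemma twelve_mul_Bcoef (s ξ : ℝ) :
    12 * Bcoef s ξ = 2 * (1 - Real.cos ξ) * (2 - Real.cos ξ) +
      2 * (2 * s - 1 - Real.cos ξ) * (2 + Real.cos ξ) := by
  rw [Bcoef, sin_sq_half_eq, cos_sq_half_eq]; ring

lemma twelve_mul_Ccoef (s ξ : ℝ) :
    12 * Ccoef s ξ = 12 * (1 - Real.cos ξ) * (2 * s - 1 - Real.cos ξ) := by
  rw [Ccoef, sin_sq_half_eq, cos_sq_half_eq]; ring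

lemma four_sin_sq_half_le_charQuadratic_vertex {s : ℝ} (ξ : ℝ) (hs : 1 ≤ s) :
    4 * Real.sin (ξ / 2) ^ 2 ≤ 12 * Bcoef s ξ / 2 := by
  rw [twelve_mul_Bcoef, sin_sq_half_eq]
  nlinarith [Real.neg_one_le_cos ξ, Real.cos_le_one ξ]

lemma charQuadratic_four_sin_sq_half_nonneg {s : ℝ} (ξ : ℝ) (hs : 1 ≤ s) :
    0 ≤ (4 * Real.sin (ξ / 2) ^ 2) ^ 2 - 12 * Bcoef s ξ * (4 * Real.sin (ξ / 2) ^ 2) +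
      12 * Ccoef s ξ := by
  rw [twelve_mul_Bcoef, twelve_mul_Ccoef, sin_sq_half_eq]
  nlinarith [sq_nonneg (1 - Real.cos ξ)]

lemma charQuadratic_fem_nonpos (s ξ : ℝ) :
    (6 * (1 - Real.cos ξ) / (2 + Real.cos ξ)) ^ 2 -
      12 * Bcoef s ξ * (6 * (1 - Real.cos ξ) / (2 + Real.cos ξ)) + 12 * Ccoef s ξ ≤ 0 := by
  have h2c : 0 < 2 + Real.cos ξ := by linarith [Real.neg_one_le_cos ξ]
  have hval : (6 * (1 - Real.cos ξ) / (2 + Real.cos ξ)) ^ 2 -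
      12 * Bcoef s ξ * (6 * (1 - Real.cos ξ) / (2 + Real.cos ξ)) + 12 * Ccoef s ξ =
      -(12 * (1 - Real.cos ξ) ^ 3 * (1 + Real.cos ξ)) / (2 + Real.cos ξ) ^ 2 := by
    rw [twelve_mul_Bcoef, twelve_mul_Ccoef]; field_simp; ring
  have h1 : 0 ≤ 1 - Real.cos ξ := sub_nonneg.2 (Real.cos_le_one ξ)
  have h2 : 0 ≤ 1 + Real.cos ξ := by linarith [Real.neg_one_le_cos ξ]
  rw [hval, neg_div, neg_nonpos]
  positivity

theorem Ssym_physical_eigenvalue_bounds_general (s ξ : ℝ) (hs : 1 < s)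
    (Λph : ℝ)
    (hph : IsEigOf (Ssym s ξ) (Λph : ℂ) ∧
      ∀ μ : ℝ, IsEigOf (Ssym s ξ) (μ : ℂ) → Λph ≤ μ) :
    4 * Real.sin (ξ / 2) ^ 2 ≤ Λph ∧
      Λph ≤ 6 * (1 - Real.cos ξ) / (2 + Real.cos ξ) := by
  have hleast : IsLeast {x : ℝ | x ^ 2 - 12 * Bcoef s ξ * x + 12 * Ccoef s ξ = 0} Λph :=
    ⟨(isEigOf_Ssym_iff s ξ Λph).1 hph.1, fun μ hμ => hph.2 μ ((isEigOf_Ssym_iff s ξ μ).2 hμ)⟩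
  exact ⟨le_of_isLeast_roots hleast (four_sin_sq_half_le_charQuadratic_vertex ξ hs.le)
      (charQuadratic_four_sin_sq_half_nonneg ξ hs.le),
    isLeast_roots_le hleast (charQuadratic_fem_nonpos s ξ)⟩

theorem Ssym_physical_eigenvalue_bounds (s ξ : ℝ) (hs : 1 < s)
    (hξ : ξ ∈ Set.Ioc 0 Real.pi) (Λph : ℝ)
    (hph : IsEigOf (Ssym s ξ) (Λph : ℂ) ∧
      ∀ μ : ℝ, IsEigOf (Ssym s ξ) (μ : ℂ) → Λph ≤ μ) :
    4 * Real.sin (ξ / 2) ^ 2 ≤ Λph ∧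
      Λph ≤ 6 * (1 - Real.cos ξ) / (2 + Real.cos ξ) :=
  Ssym_physical_eigenvalue_bounds_general s ξ hs Λph hph
end

section
/- For s = 3 the two roots of the quadratic Λ²/12 − B(ξ)Λ + C(ξ) = 0 with B(ξ) = 4 sin²(ξ/2)(2−cos ξ)/12 + (3 − cos²(ξ/2))(2+cos ξ)/3 and C(ξ) = 4 sin²(ξ/2)(3 − cos²(ξ/2)) coincide at ξ = π, both equal to 12, i.e. the discriminant B(π)² − (4/12)·C(π) = 0. -/
open Real Complex Matrix Filter Topology

theorem Bcoef_pi (s : ℝ) : Bcoef s Real.pi = 1 + s / 3 := by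
  simp only [Bcoef, Real.sin_pi_div_two, Real.cos_pi_div_two, Real.cos_pi]
  ring

theorem Ccoef_pi (s : ℝ) : Ccoef s Real.pi = 4 * s := by
  simp only [Ccoef, Real.sin_pi_div_two, Real.cos_pi_div_two]
  ring

/-- The two branches meet at `ξ = π` only for the penalty `s = 3`. -/
theorem discrim_Bcoef_Ccoef_pi (s : ℝ) :
    discrim (1 / 12) (-Bcoef s Real.pi) (Ccoef s Real.pi) = (1 - s / 3) ^ 2 := by
  rw [discrim, Bcoef_pi, Ccoef_pi]
  ring

theorem degeneracy_at_pi_for_s_eq_three :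
    Bcoef 3 Real.pi ^ 2 - (4 / 12) * Ccoef 3 Real.pi = 0 ∧
    ∀ Λ : ℝ, Λ ^ 2 / 12 - Bcoef 3 Real.pi * Λ + Ccoef 3 Real.pi = 0 ↔ Λ = 12 := by
  have hdiscrim : discrim (1 / 12) (-Bcoef 3 Real.pi) (Ccoef 3 Real.pi) = 0 := by
    rw [discrim_Bcoef_Ccoef_pi]
    norm_num
  refine ⟨by rw [← hdiscrim, discrim]; ring, fun Λ => ?_⟩
  have hvertex : -(-Bcoef 3 Real.pi) / (2 * (1 / 12)) = 12 := by
    rw [Bcoef_pi]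
    norm_num
  have hroot := quadratic_eq_zero_iff_of_discrim_eq_zero (by norm_num) hdiscrim Λ
  rw [hvertex] at hroot
  rw [← hroot]
  ring_nf
end
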